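/- (Modified Dai–Yuan global convergence) Assume Assumptions A1 and A2 hold for x⁰, and let ζ > 1. Consider the conjugate gradient iteration with β_k := β_k^{mDY}, where β_k^{mDY} := −ψ_{x^k}(v(x^k)) / (ψ_{x^k}(d^{k−1}) − ζ·ψ_{x^{k−1}}(d^{k−1})) for k ≥ 1. If each t_k satisfies the strong Wolfe conditions at x^k along d^k, then liminf_{k→∞} ‖v(x^k)‖ = 0. -/

import Mathlib

/-!
Sublinearity of `ψₓ` and the choice of `β^{mDY}` give, along the iteration, descent directions
with `ψ_{k+1}(d^{k+1}) ≤ ζ β_{k+1} ψ_k(d^k) < 0` and `‖v(x^{k+1})‖² ≤ 2(σ + ζ) β_{k+1} |ψ_k(d^k)|`.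
The Armijo condition with A2, and the curvature condition with the Lipschitz bound of A1, give
the Zoutendijk condition `∑ ψ_k(d^k)² / ‖d^k‖² < ∞`. By Young's inequality with weight `ζ² - 1`,
the ratios `r_k = ‖d^k‖² / ψ_k(d^k)²` satisfy `r_{k+1} ≤ r_k + c / ‖v(x^{k+1})‖²` for a constant
`c`. If `‖v(x^k)‖` stayed away from `0`, `r_k` would grow at most linearly and `∑ 1 / r_k` would
diverge like the harmonic series.
-/

open scoped BigOperators

noncomputable def pd (n : ℕ) (F : EuclideanSpace ℝ (Fin n) → ℝ)
    (x : EuclideanSpace ℝ (Fin n)) (j : Fin n) : ℝ :=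
  fderiv ℝ F x (EuclideanSpace.single j (1 : ℝ))

noncomputable def glo (n : ℕ) (F H : EuclideanSpace ℝ (Fin n) → ℝ)
    (x : EuclideanSpace ℝ (Fin n)) (j : Fin n) : ℝ :=
  min (pd n F x j) (pd n H x j)

noncomputable def ghi (n : ℕ) (F H : EuclideanSpace ℝ (Fin n) → ℝ)
    (x : EuclideanSpace ℝ (Fin n)) (j : Fin n) : ℝ :=
  max (pd n F x j) (pd n H x j)

noncomputable def gloVec (n : ℕ) (F H : EuclideanSpace ℝ (Fin n) → ℝ)
    (x : EuclideanSpace ℝ (Fin n)) : EuclideanSpace ℝ (Fin n) :=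
  WithLp.toLp 2 (fun j => glo n F H x j)

noncomputable def ghiVec (n : ℕ) (F H : EuclideanSpace ℝ (Fin n) → ℝ)
    (x : EuclideanSpace ℝ (Fin n)) : EuclideanSpace ℝ (Fin n) :=
  WithLp.toLp 2 (fun j => ghi n F H x j)

noncomputable def psi (m n : ℕ) (Gl Gu : Fin m → EuclideanSpace ℝ (Fin n) → ℝ)
    (x v : EuclideanSpace ℝ (Fin n)) : ℝ :=
  ⨆ i : Fin m, (1 / 2 : ℝ) *
    ((∑ j : Fin n, (glo n (Gl i) (Gu i) x j + ghi n (Gl i) (Gu i) x j) * v j) +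
     (∑ j : Fin n, (ghi n (Gl i) (Gu i) x j - glo n (Gl i) (Gu i) x j) * |v j|))

def LevelSet (m n : ℕ) (Gl Gu : Fin m → EuclideanSpace ℝ (Fin n) → ℝ)
    (x0 : EuclideanSpace ℝ (Fin n)) : Set (EuclideanSpace ℝ (Fin n)) :=
  {x | ∀ i : Fin m, Gl i x ≤ Gl i x0 ∧ Gu i x ≤ Gu i x0}

def StdWolfe (m n : ℕ) (Gl Gu : Fin m → EuclideanSpace ℝ (Fin n) → ℝ)
    (ρ σ : ℝ) (x d : EuclideanSpace ℝ (Fin n)) (t : ℝ) : Prop :=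
  (∀ i : Fin m,
      Gl i (x + t • d) ≤ Gl i x + ρ * t * psi m n Gl Gu x d ∧
      Gu i (x + t • d) ≤ Gu i x + ρ * t * psi m n Gl Gu x d) ∧
  σ * psi m n Gl Gu x d ≤ psi m n Gl Gu (x + t • d) d

def StrongWolfe (m n : ℕ) (Gl Gu : Fin m → EuclideanSpace ℝ (Fin n) → ℝ)
    (ρ σ : ℝ) (x d : EuclideanSpace ℝ (Fin n)) (t : ℝ) : Prop :=
  (∀ i : Fin m,
      Gl i (x + t • d) ≤ Gl i x + ρ * t * psi m n Gl Gu x d ∧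
      Gu i (x + t • d) ≤ Gu i x + ρ * t * psi m n Gl Gu x d) ∧
  |psi m n Gl Gu (x + t • d) d| ≤ σ * |psi m n Gl Gu x d|

def AssumptionA1 (m n : ℕ) (Gl Gu : Fin m → EuclideanSpace ℝ (Fin n) → ℝ)
    (x0 : EuclideanSpace ℝ (Fin n)) : Prop :=
  ∀ i : Fin m, ∃ L : ℝ, 0 < L ∧
    ∀ y ∈ LevelSet m n Gl Gu x0, ∀ z ∈ LevelSet m n Gl Gu x0,
      ‖gloVec n (Gl i) (Gu i) y - gloVec n (Gl i) (Gu i) z‖ ≤ L * ‖y - z‖ ∧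
      ‖ghiVec n (Gl i) (Gu i) y - ghiVec n (Gl i) (Gu i) z‖ ≤ L * ‖y - z‖

def AssumptionA2 (m n : ℕ) (Gl Gu : Fin m → EuclideanSpace ℝ (Fin n) → ℝ)
    (x0 : EuclideanSpace ℝ (Fin n)) : Prop :=
  ∀ y : ℕ → EuclideanSpace ℝ (Fin n),
    (∀ k, y k ∈ LevelSet m n Gl Gu x0) →
    (∀ (i : Fin m) (k : ℕ), Gl i (y (k+1)) ≤ Gl i (y k) ∧ Gu i (y (k+1)) ≤ Gu i (y k)) →
    ∀ i : Fin m, (∃ Cl : ℝ, ∀ k, Cl ≤ Gl i (y k)) ∧ (∃ Cu : ℝ, ∀ k, Cu ≤ Gu i (y k))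

section BoxSupport

variable {n : ℕ}

lemma sum_mul_le_norm_mul_norm (a v : EuclideanSpace ℝ (Fin n)) :
    ∑ j, a j * v j ≤ ‖a‖ * ‖v‖ := by
  simpa [PiLp.inner_apply, mul_comm] using real_inner_le_norm a v

lemma sum_mul_abs_le_norm_mul_norm (a v : EuclideanSpace ℝ (Fin n)) :
    ∑ j, a j * |v j| ≤ ‖a‖ * ‖v‖ := by
  have hnorm : ‖(WithLp.toLp 2 fun j => |v j| : EuclideanSpace ℝ (Fin n))‖ = ‖v‖ := by
    simp [EuclideanSpace.norm_eq]
  simpa [hnorm] using sum_mul_le_norm_mul_norm a (WithLp.toLp 2 fun j => |v j|)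

/-- For `a ≤ b` componentwise this is `max {⟪g, v⟫ | a ≤ g ≤ b}`, the support function of the
box `[a, b]`; `psi x v` is the maximum over `i` of it for the box `[g̲ᵢ(x), g̅ᵢ(x)]`. -/
noncomputable def boxSupport (a b v : EuclideanSpace ℝ (Fin n)) : ℝ :=
  (1 / 2 : ℝ) * ((∑ j, (a j + b j) * v j) + ∑ j, (b j - a j) * |v j|)

@[simp]
lemma boxSupport_zero_right (a b : EuclideanSpace ℝ (Fin n)) : boxSupport a b 0 = 0 := by
  simp [boxSupport]

lemma boxSupport_add_smul_le {a b : EuclideanSpace ℝ (Fin n)} (hab : ∀ j, a j ≤ b j)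
    (v w : EuclideanSpace ℝ (Fin n)) {c : ℝ} (hc : 0 ≤ c) :
    boxSupport a b (v + c • w) ≤ boxSupport a b v + c * boxSupport a b w := by
  have hlin : ∑ j, (a j + b j) * (v + c • w) j =
      ∑ j, (a j + b j) * v j + c * ∑ j, (a j + b j) * w j := by
    rw [Finset.mul_sum, ← Finset.sum_add_distrib]
    refine Finset.sum_congr rfl fun j _ => ?_
    simp only [PiLp.add_apply, PiLp.smul_apply, smul_eq_mul]
    ring
  have habs : ∑ j, (b j - a j) * |(v + c • w) j| ≤
      ∑ j, (b j - a j) * |v j| + c * ∑ j, (b j - a j) * |w j| := by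
    rw [Finset.mul_sum, ← Finset.sum_add_distrib]
    refine Finset.sum_le_sum fun j _ => ?_
    have := mul_le_mul_of_nonneg_left (abs_add_le (v j) (c * w j)) (sub_nonneg.2 (hab j))
    simp only [PiLp.add_apply, PiLp.smul_apply, smul_eq_mul, abs_mul, abs_of_nonneg hc] at this ⊢
    linarith
  simp only [boxSupport, hlin]
  linarith

lemma boxSupport_sub_boxSupport (a b a' b' v : EuclideanSpace ℝ (Fin n)) :
    boxSupport a' b' v - boxSupport a b v = boxSupport (a' - a) (b' - b) v := by
  simp only [boxSupport, PiLp.sub_apply, ← mul_sub]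
  congr 1
  rw [add_sub_add_comm, ← Finset.sum_sub_distrib, ← Finset.sum_sub_distrib]
  congr 1 <;> refine Finset.sum_congr rfl fun j _ => by ring

lemma boxSupport_le_norm_mul_norm (a b v : EuclideanSpace ℝ (Fin n)) :
    boxSupport a b v ≤ (‖a‖ + ‖b‖) * ‖v‖ := by
  have h₁ := sum_mul_le_norm_mul_norm (a + b) v
  have h₂ := sum_mul_abs_le_norm_mul_norm (b - a) v
  have h₃ := mul_le_mul_of_nonneg_right (norm_add_le a b) (norm_nonneg v)
  have h₄ := mul_le_mul_of_nonneg_right (norm_sub_le b a) (norm_nonneg v)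
  simp only [boxSupport, PiLp.add_apply, PiLp.sub_apply] at h₁ h₂ ⊢
  linarith

end BoxSupport

section Psi

variable {m n : ℕ} {Gl Gu : Fin m → EuclideanSpace ℝ (Fin n) → ℝ}

lemma psi_eq_iSup_boxSupport (x v : EuclideanSpace ℝ (Fin n)) :
    psi m n Gl Gu x v = ⨆ i, boxSupport (gloVec n (Gl i) (Gu i) x) (ghiVec n (Gl i) (Gu i) x) v :=
  rfl

lemma boxSupport_le_psi (x v : EuclideanSpace ℝ (Fin n)) (i : Fin m) :
    boxSupport (gloVec n (Gl i) (Gu i) x) (ghiVec n (Gl i) (Gu i) x) v ≤ psi m n Gl Gu x v :=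
  le_ciSup (f := fun i => boxSupport (gloVec n (Gl i) (Gu i) x) (ghiVec n (Gl i) (Gu i) x) v)
    (Set.finite_range _).bddAbove i

@[simp]
lemma psi_zero_right (x : EuclideanSpace ℝ (Fin n)) : psi m n Gl Gu x 0 = 0 := by
  simp [psi_eq_iSup_boxSupport]

lemma ne_zero_of_psi_neg {x d : EuclideanSpace ℝ (Fin n)} (hd : psi m n Gl Gu x d < 0) :
    d ≠ 0 := by
  rintro rfl
  simp at hd

lemma psi_add_smul_le [Nonempty (Fin m)] (x v w : EuclideanSpace ℝ (Fin n)) {c : ℝ}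
    (hc : 0 ≤ c) :
    psi m n Gl Gu x (v + c • w) ≤ psi m n Gl Gu x v + c * psi m n Gl Gu x w :=
  ciSup_le fun i => (boxSupport_add_smul_le (fun _ => min_le_max) v w hc).trans <|
    add_le_add (boxSupport_le_psi x v i) (mul_le_mul_of_nonneg_left (boxSupport_le_psi x w i) hc)

lemma psi_le_psi_add [Nonempty (Fin m)] {x y : EuclideanSpace ℝ (Fin n)} {C : ℝ}
    (hC : ∀ i, ‖gloVec n (Gl i) (Gu i) y - gloVec n (Gl i) (Gu i) x‖ +
      ‖ghiVec n (Gl i) (Gu i) y - ghiVec n (Gl i) (Gu i) x‖ ≤ C)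
    (v : EuclideanSpace ℝ (Fin n)) :
    psi m n Gl Gu y v ≤ psi m n Gl Gu x v + C * ‖v‖ := by
  refine (psi_eq_iSup_boxSupport y v).trans_le (ciSup_le fun i => ?_)
  have hsub := boxSupport_sub_boxSupport (gloVec n (Gl i) (Gu i) x) (ghiVec n (Gl i) (Gu i) x)
    (gloVec n (Gl i) (Gu i) y) (ghiVec n (Gl i) (Gu i) y) v
  have hΔ := (boxSupport_le_norm_mul_norm _ _ v).trans
    (mul_le_mul_of_nonneg_right (hC i) (norm_nonneg v))
  linarith [boxSupport_le_psi (Gl := Gl) (Gu := Gu) x v i]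

lemma AssumptionA1.exists_psi_le [Nonempty (Fin m)] {x0 : EuclideanSpace ℝ (Fin n)}
    (h : AssumptionA1 m n Gl Gu x0) :
    ∃ L, 0 < L ∧ ∀ y ∈ LevelSet m n Gl Gu x0, ∀ z ∈ LevelSet m n Gl Gu x0,
      ∀ v, psi m n Gl Gu y v ≤ psi m n Gl Gu z v + 2 * L * ‖y - z‖ * ‖v‖ := by
  choose L _ hL using h
  obtain ⟨M, hM⟩ := Finite.exists_le L
  refine ⟨max M 1, by positivity, fun y hy z hz v => ?_⟩
  refine psi_le_psi_add (fun i => ?_) v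
  have hLi : L i * ‖y - z‖ ≤ max M 1 * ‖y - z‖ :=
    mul_le_mul_of_nonneg_right ((hM i).trans (le_max_left M 1)) (norm_nonneg _)
  linarith [(hL i y hy z hz).1, (hL i y hy z hz).2]

lemma psi_le_neg_half_sq {x v : EuclideanSpace ℝ (Fin n)}
    (hv : ∀ w, psi m n Gl Gu x v + (1/2) * ‖v‖^2 ≤ psi m n Gl Gu x w + (1/2) * ‖w‖^2) :
    psi m n Gl Gu x v ≤ -(1/2) * ‖v‖^2 := by
  have := hv 0
  simp only [psi_zero_right, norm_zero] at this
  linarith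

end Psi

lemma summable_of_sufficient_decrease {f a : ℕ → ℝ} (ha : ∀ k, 0 ≤ a k)
    (hdec : ∀ k, f (k + 1) + a k ≤ f k) {C : ℝ} (hC : ∀ k, C ≤ f k) : Summable a := by
  refine summable_of_sum_range_le (c := f 0 - C) ha fun N => ?_
  have htel : ∑ k ∈ Finset.range N, a k ≤ ∑ k ∈ Finset.range N, (f k - f (k + 1)) :=
    Finset.sum_le_sum fun k _ => by linarith [hdec k]
  rw [Finset.sum_range_sub'] at htel
  linarith [hC N]

section Wolfe

variable {m n : ℕ} {Gl Gu : Fin m → EuclideanSpace ℝ (Fin n) → ℝ} {ρ σ : ℝ}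

lemma StrongWolfe.stdWolfe {x d : EuclideanSpace ℝ (Fin n)} {t : ℝ}
    (h : StrongWolfe m n Gl Gu ρ σ x d t) (hd : psi m n Gl Gu x d < 0) :
    StdWolfe m n Gl Gu ρ σ x d t := by
  refine ⟨h.1, ?_⟩
  have := (abs_le.1 h.2).1
  rw [abs_of_neg hd] at this
  linarith

lemma StdWolfe.one_sub_mul_neg_psi_le {x d : EuclideanSpace ℝ (Fin n)} {t L : ℝ}
    (h : StdWolfe m n Gl Gu ρ σ x d t) (ht : 0 ≤ t)
    (hLip : psi m n Gl Gu (x + t • d) d ≤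
      psi m n Gl Gu x d + 2 * L * ‖x + t • d - x‖ * ‖d‖) :
    (1 - σ) * -psi m n Gl Gu x d ≤ 2 * L * t * ‖d‖ ^ 2 := by
  rw [add_sub_cancel_left, norm_smul, Real.norm_of_nonneg ht] at hLip
  linarith [h.2]

lemma mem_levelSet_of_antitone {x : ℕ → EuclideanSpace ℝ (Fin n)}
    (h : ∀ i k, Gl i (x (k + 1)) ≤ Gl i (x k) ∧ Gu i (x (k + 1)) ≤ Gu i (x k)) (k : ℕ) :
    x k ∈ LevelSet m n Gl Gu (x 0) := by
  induction k with
  | zero => exact fun i => ⟨le_rfl, le_rfl⟩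
  | succ k ih => exact fun i => ⟨(h i k).1.trans (ih i).1, (h i k).2.trans (ih i).2⟩

variable {x d : ℕ → EuclideanSpace ℝ (Fin n)} {t : ℕ → ℝ}

theorem summable_sq_psi_div_sq_norm [Nonempty (Fin m)] (hρ : 0 < ρ) (hσ : σ < 1)
    (hA1 : AssumptionA1 m n Gl Gu (x 0)) (hA2 : AssumptionA2 m n Gl Gu (x 0))
    (hx : ∀ k, x (k + 1) = x k + t k • d k) (ht : ∀ k, 0 < t k)
    (hd : ∀ k, psi m n Gl Gu (x k) (d k) < 0)
    (hw : ∀ k, StdWolfe m n Gl Gu ρ σ (x k) (d k) (t k)) :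
    Summable fun k => psi m n Gl Gu (x k) (d k) ^ 2 / ‖d k‖ ^ 2 := by
  have hpos : ∀ k, 0 ≤ ρ * t k * -psi m n Gl Gu (x k) (d k) := fun k =>
    mul_nonneg (mul_pos hρ (ht k)).le (neg_nonneg.2 (hd k).le)
  have hdecr : ∀ i k, Gl i (x (k + 1)) + ρ * t k * -psi m n Gl Gu (x k) (d k) ≤ Gl i (x k) ∧
      Gu i (x (k + 1)) + ρ * t k * -psi m n Gl Gu (x k) (d k) ≤ Gu i (x k) := by
    intro i k
    have := (hw k).1 i
    rw [← hx k] at this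
    constructor <;> linarith
  have hmono : ∀ i k, Gl i (x (k + 1)) ≤ Gl i (x k) ∧ Gu i (x (k + 1)) ≤ Gu i (x k) :=
    fun i k => ⟨by linarith [(hdecr i k).1, hpos k], by linarith [(hdecr i k).2, hpos k]⟩
  have hsum : Summable fun k => ρ * t k * -psi m n Gl Gu (x k) (d k) := by
    let i := Classical.arbitrary (Fin m)
    obtain ⟨⟨C, hC⟩, -⟩ := hA2 x (mem_levelSet_of_antitone hmono) hmono i
    exact summable_of_sufficient_decrease hpos (fun k => (hdecr i k).1) hC
  obtain ⟨L, hL, hLip⟩ := hA1.exists_psi_le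
  have hstep : ∀ k, (1 - σ) * -psi m n Gl Gu (x k) (d k) ≤ 2 * L * t k * ‖d k‖ ^ 2 :=
    fun k => (hw k).one_sub_mul_neg_psi_le (ht k).le <| hx k ▸
      hLip _ (mem_levelSet_of_antitone hmono (k + 1)) _ (mem_levelSet_of_antitone hmono k) (d k)
  refine (hsum.mul_left (2 * L / (ρ * (1 - σ)))).of_nonneg_of_le (fun k => by positivity)
    fun k => ?_
  have hdk : 0 < ‖d k‖ := norm_pos_iff.2 (ne_zero_of_psi_neg (hd k))
  have hσ' : 0 < 1 - σ := sub_pos.2 hσ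
  have := mul_le_mul_of_nonneg_left (hstep k) (neg_nonneg.2 (hd k).le)
  rw [div_le_iff₀ (by positivity), div_mul_eq_mul_div, div_mul_eq_mul_div,
    le_div_iff₀ (by positivity)]
  nlinarith

end Wolfe

section ModifiedDaiYuan

variable {m n : ℕ} {Gl Gu : Fin m → EuclideanSpace ℝ (Fin n) → ℝ} {σ ζ : ℝ}

theorem mdy_step [Nonempty (Fin m)] {x x' d v : EuclideanSpace ℝ (Fin n)} {β : ℝ}
    (hσζ : σ < ζ) (hd : psi m n Gl Gu x d < 0)
    (hcurv : |psi m n Gl Gu x' d| ≤ σ * |psi m n Gl Gu x d|)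
    (hv : psi m n Gl Gu x' v ≤ -(1/2) * ‖v‖^2) (hv0 : v ≠ 0)
    (hβ : β = -psi m n Gl Gu x' v / (psi m n Gl Gu x' d - ζ * psi m n Gl Gu x d)) :
    0 < β ∧ psi m n Gl Gu x' (v + β • d) ≤ ζ * β * psi m n Gl Gu x d ∧
      ‖v‖^2 ≤ 2 * (σ + ζ) * β * -psi m n Gl Gu x d := by
  rw [abs_of_neg hd] at hcurv
  obtain ⟨hq_lo, hq_hi⟩ := abs_le.1 hcurv
  have hden : 0 < psi m n Gl Gu x' d - ζ * psi m n Gl Gu x d := by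
    nlinarith [mul_pos (sub_pos.2 hσζ) (neg_pos.2 hd)]
  have hvneg : psi m n Gl Gu x' v < 0 := by
    have := norm_pos_iff.2 hv0
    nlinarith
  have hβpos : 0 < β := hβ ▸ div_pos (neg_pos.2 hvneg) hden
  have hψv : psi m n Gl Gu x' v = -(β * (psi m n Gl Gu x' d - ζ * psi m n Gl Gu x d)) := by
    rw [hβ, div_mul_cancel₀ _ hden.ne', neg_neg]
  refine ⟨hβpos, ?_, ?_⟩
  · calc psi m n Gl Gu x' (v + β • d)
        ≤ psi m n Gl Gu x' v + β * psi m n Gl Gu x' d := psi_add_smul_le x' v d hβpos.le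
      _ = ζ * β * psi m n Gl Gu x d := by rw [hψv]; ring
  · nlinarith [mul_le_mul_of_nonneg_left hq_hi hβpos.le]

theorem mdy_psi_dir_neg [Nonempty (Fin m)]
    {vv : EuclideanSpace ℝ (Fin n) → EuclideanSpace ℝ (Fin n)}
    {x d : ℕ → EuclideanSpace ℝ (Fin n)} {β : ℕ → ℝ} (hζ : 0 < ζ) (hσζ : σ < ζ)
    (hv : ∀ k, psi m n Gl Gu (x k) (vv (x k)) ≤ -(1/2) * ‖vv (x k)‖^2)
    (hvne : ∀ k, vv (x k) ≠ 0) (hd0 : d 0 = vv (x 0))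
    (hdk : ∀ k, d (k + 1) = vv (x (k + 1)) + β (k + 1) • d k)
    (hβ : ∀ k, β (k + 1) = -psi m n Gl Gu (x (k + 1)) (vv (x (k + 1))) /
      (psi m n Gl Gu (x (k + 1)) (d k) - ζ * psi m n Gl Gu (x k) (d k)))
    (hcurv : ∀ k, |psi m n Gl Gu (x (k + 1)) (d k)| ≤ σ * |psi m n Gl Gu (x k) (d k)|)
    (k : ℕ) :
    psi m n Gl Gu (x k) (d k) < 0 := by
  induction k with
  | zero =>
    rw [hd0]
    exact (hv 0).trans_lt (by have := norm_pos_iff.2 (hvne 0); nlinarith)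
  | succ k ih =>
    obtain ⟨hβpos, hdesc, -⟩ := mdy_step hσζ ih (hcurv k) (hv _) (hvne _) (hβ k)
    rw [hdk k]
    exact hdesc.trans_lt (mul_neg_of_pos_of_neg (by positivity) ih)

end ModifiedDaiYuan

lemma sq_div_sq_le_sq_div_sq_add {D D' V p p' β ζ M : ℝ} (hζ : 1 < ζ) (hβ : 0 < β)
    (hV : 0 < V) (hp : p < 0) (hD'0 : 0 ≤ D') (hD' : D' ≤ V + β * D) (hp' : p' ≤ ζ * β * p)
    (hV2 : V^2 ≤ M * β * -p) :
    D'^2 / p'^2 ≤ D^2 / p^2 + M^2 / (ζ^2 - 1) / V^2 := by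
  have hζ2 : 0 < ζ^2 - 1 := by nlinarith
  have hζ0 : 0 < ζ := by linarith
  have hp0 : p ≠ 0 := hp.ne
  have hp'sq : (ζ * β * p)^2 ≤ p'^2 := by
    have : ζ * β * p < 0 := mul_neg_of_pos_of_neg (mul_pos hζ0 hβ) hp
    nlinarith
  -- Young's inequality with weight ζ² - 1 makes the coefficient of D² / p² exactly 1.
  have hyoung : D'^2 ≤ ζ^2 / (ζ^2 - 1) * V^2 + ζ^2 * (β * D)^2 := by
    have hsq : D'^2 ≤ (V + β * D)^2 := pow_le_pow_left₀ hD'0 hD' 2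
    have : (ζ^2 - 1) * (V + β * D)^2 ≤ ζ^2 * V^2 + (ζ^2 - 1) * (ζ^2 * (β * D)^2) := by
      nlinarith [sq_nonneg (V - (ζ^2 - 1) * (β * D))]
    rw [div_mul_eq_mul_div, div_add' _ _ _ hζ2.ne', le_div_iff₀ hζ2]
    nlinarith
  have hV4 : V^2 * V^2 ≤ M^2 * (β * p)^2 := by
    have := mul_le_mul hV2 hV2 (sq_nonneg V) (by nlinarith)
    nlinarith
  calc D'^2 / p'^2 ≤ D'^2 / (ζ * β * p)^2 :=
        div_le_div_of_nonneg_left (sq_nonneg _) (by positivity) hp'sq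
    _ ≤ (ζ^2 / (ζ^2 - 1) * V^2 + ζ^2 * (β * D)^2) / (ζ * β * p)^2 := by gcongr
    _ = D^2 / p^2 + V^2 / (ζ^2 - 1) / (β * p)^2 := by
        field_simp
        ring
    _ ≤ D^2 / p^2 + M^2 / (ζ^2 - 1) / V^2 := by
        gcongr D^2 / p^2 + ?_
        rw [div_div, div_div, div_le_div_iff₀ (by positivity) (by positivity)]
        nlinarith

lemma not_summable_one_div_add_mul {a b : ℝ} (ha : 0 < a) (hb : 0 ≤ b) :
    ¬Summable fun j : ℕ => 1 / (a + b * j) := by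
  intro h
  apply Real.not_summable_one_div_natCast
  rw [← summable_nat_add_iff 1]
  refine (h.mul_left (a + b)).of_nonneg_of_le (fun j => by positivity) fun j => ?_
  rw [mul_one_div, le_div_iff₀ (by positivity), Nat.cast_add_one, one_div_mul_eq_div,
    div_le_iff₀ (by positivity)]
  nlinarith [(Nat.cast_nonneg j : (0:ℝ) ≤ j)]

lemma frequently_lt_of_summable_one_div {r u : ℕ → ℝ} {c : ℝ} (hc : 0 ≤ c)
    (hr : ∀ k, 0 < r k) (hs : Summable fun k => 1 / r k)
    (hrec : ∀ k, r (k + 1) ≤ r k + c / u (k + 1)^2) {γ : ℝ} (hγ : 0 < γ) :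
    ∃ᶠ k in Filter.atTop, u k < γ := by
  by_contra h
  obtain ⟨K, hK⟩ := Filter.eventually_atTop.1 (Filter.not_frequently.1 h)
  have hlin : ∀ j : ℕ, r (j + K) ≤ r K + c / γ^2 * j := by
    intro j
    induction j with
    | zero => simp
    | succ j ih =>
      have hu : c / u (j + K + 1)^2 ≤ c / γ^2 := by
        have := not_lt.1 (hK (j + K + 1) (by omega))
        gcongr
      rw [add_right_comm]
      push_cast
      linarith [hrec (j + K)]
  refine not_summable_one_div_add_mul (hr K) (by positivity : 0 ≤ c / γ^2) <|
    ((summable_nat_add_iff K).2 hs).of_nonneg_of_le (fun j => by have := hr K; positivity)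
      fun j => ?_
  exact one_div_le_one_div_of_le (hr _) (hlin j)

lemma liminf_eq_zero_of_frequently_lt {u : ℕ → ℝ} (hu : ∀ k, 0 ≤ u k)
    (h : ∀ γ > 0, ∃ᶠ k in Filter.atTop, u k < γ) : Filter.liminf u Filter.atTop = 0 := by
  rw [Filter.liminf_eq]
  refine IsGreatest.csSup_eq ⟨Filter.Eventually.of_forall hu, fun a ha => ?_⟩
  by_contra! ha0
  obtain ⟨k, hk, hak⟩ := ((h a ha0).and_eventually ha).exists
  linarith

theorem mdy_convergence_general (m n : ℕ) (hm : 0 < m)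
    (Gl Gu : Fin m → EuclideanSpace ℝ (Fin n) → ℝ)
    (vv : EuclideanSpace ℝ (Fin n) → EuclideanSpace ℝ (Fin n))
    (hvmin : ∀ y w : EuclideanSpace ℝ (Fin n),
      psi m n Gl Gu y (vv y) + (1/2) * ‖vv y‖^2 ≤ psi m n Gl Gu y w + (1/2) * ‖w‖^2)
    (ρ σ : ℝ) (hρ : 0 < ρ) (hσ : σ < 1)
    (x d : ℕ → EuclideanSpace ℝ (Fin n)) (t : ℕ → ℝ) (β : ℕ → ℝ)
    (hx : ∀ k : ℕ, x (k+1) = x k + t k • d k)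
    (ht : ∀ k : ℕ, 0 < t k)
    (hd0 : d 0 = vv (x 0))
    (hdk : ∀ k : ℕ, d (k+1) = vv (x (k+1)) + β (k+1) • d k)
    (hvne : ∀ k : ℕ, vv (x k) ≠ 0)
    (ζ : ℝ) (hζ : 1 < ζ)
    (hA1 : AssumptionA1 m n Gl Gu (x 0))
    (hA2 : AssumptionA2 m n Gl Gu (x 0))
    (hβ : ∀ k : ℕ, β (k+1) =
      -psi m n Gl Gu (x (k+1)) (vv (x (k+1))) /
        (psi m n Gl Gu (x (k+1)) (d k) - ζ * psi m n Gl Gu (x k) (d k)))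
    (hw : ∀ k : ℕ, StrongWolfe m n Gl Gu ρ σ (x k) (d k) (t k)) :
    Filter.liminf (fun k : ℕ => ‖vv (x k)‖) Filter.atTop = 0 := by
  have : Nonempty (Fin m) := ⟨⟨0, hm⟩⟩
  have hσζ : σ < ζ := hσ.trans hζ
  have hv : ∀ y, psi m n Gl Gu y (vv y) ≤ -(1/2) * ‖vv y‖^2 := fun y =>
    psi_le_neg_half_sq (hvmin y)
  have hcurv : ∀ k, |psi m n Gl Gu (x (k+1)) (d k)| ≤ σ * |psi m n Gl Gu (x k) (d k)| :=
    fun k => hx k ▸ (hw k).2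
  have hneg := mdy_psi_dir_neg (by linarith) hσζ (fun k => hv _) hvne hd0 hdk hβ hcurv
  have hzout := summable_sq_psi_div_sq_norm hρ hσ hA1 hA2 hx ht hneg fun k =>
    (hw k).stdWolfe (hneg k)
  refine liminf_eq_zero_of_frequently_lt (fun k => norm_nonneg _) fun γ hγ =>
    frequently_lt_of_summable_one_div (r := fun k => ‖d k‖^2 / psi m n Gl Gu (x k) (d k)^2)
      (c := (2 * (σ + ζ))^2 / (ζ^2 - 1)) (div_nonneg (sq_nonneg _) (by nlinarith))
      (fun k => div_pos (pow_pos (norm_pos_iff.2 (ne_zero_of_psi_neg (hneg k))) 2)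
        (pow_two_pos_of_ne_zero (hneg k).ne))
      (by simpa only [one_div_div] using hzout) (fun k => ?_) hγ
  obtain ⟨hβpos, hdesc, hvβ⟩ := mdy_step hσζ (hneg k) (hcurv k) (hv _) (hvne _) (hβ k)
  have hnorm : ‖d (k+1)‖ ≤ ‖vv (x (k+1))‖ + β (k+1) * ‖d k‖ := by
    rw [hdk k]
    refine (norm_add_le _ _).trans_eq ?_
    rw [norm_smul, Real.norm_of_nonneg hβpos.le]
  rw [← hdk k] at hdesc
  exact sq_div_sq_le_sq_div_sq_add hζ hβpos (norm_pos_iff.2 (hvne _)) (hneg k) (norm_nonneg _)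
    hnorm hdesc hvβ

theorem mdy_convergence (m n : ℕ) (hm : 0 < m) (hn : 0 < n)
    (Gl Gu : Fin m → EuclideanSpace ℝ (Fin n) → ℝ)
    (hGl : ∀ i, ContDiff ℝ 1 (Gl i)) (hGu : ∀ i, ContDiff ℝ 1 (Gu i))
    (hle : ∀ (i : Fin m) (x : EuclideanSpace ℝ (Fin n)), Gl i x ≤ Gu i x)
    (vv : EuclideanSpace ℝ (Fin n) → EuclideanSpace ℝ (Fin n))
    (hvmin : ∀ y w : EuclideanSpace ℝ (Fin n),
      psi m n Gl Gu y (vv y) + (1/2) * ‖vv y‖^2 ≤ psi m n Gl Gu y w + (1/2) * ‖w‖^2)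
    (ρ σ : ℝ) (hρ : 0 < ρ) (hρσ : ρ < σ) (hσ : σ < 1)
    (x d : ℕ → EuclideanSpace ℝ (Fin n)) (t : ℕ → ℝ) (β : ℕ → ℝ)
    (hx : ∀ k : ℕ, x (k+1) = x k + t k • d k)
    (ht : ∀ k : ℕ, 0 < t k)
    (hd0 : d 0 = vv (x 0))
    (hdk : ∀ k : ℕ, d (k+1) = vv (x (k+1)) + β (k+1) • d k)
    (hvne : ∀ k : ℕ, vv (x k) ≠ 0)
    (ζ : ℝ) (hζ : 1 < ζ)
    (hA1 : AssumptionA1 m n Gl Gu (x 0))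
    (hA2 : AssumptionA2 m n Gl Gu (x 0))
    (hβ : ∀ k : ℕ, β (k+1) =
      -psi m n Gl Gu (x (k+1)) (vv (x (k+1))) /
        (psi m n Gl Gu (x (k+1)) (d k) - ζ * psi m n Gl Gu (x k) (d k)))
    (hw : ∀ k : ℕ, StrongWolfe m n Gl Gu ρ σ (x k) (d k) (t k)) :
    Filter.liminf (fun k : ℕ => ‖vv (x k)‖) Filter.atTop = 0 :=
  mdy_convergence_general m n hm Gl Gu vv hvmin ρ σ hρ hσ x d t β hx ht hd0 hdk hvne ζ hζ hA1 hA2 hβ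
    hw
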